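/- Let κ > 0 and let θ, ω, Ξ be C¹ and H continuous on an open set Ω ⊆ ℝ², with 0 < ω < π/2 on Ω. Set G(ω) = (sin²ω/(κ+sin²ω))^((κ+1)/(2κ)), α = θ+ω, β = θ−ω, and ∂⁺f = cos(α)·f_x + sin(α)·f_y, ∂⁻f = cos(β)·f_x + sin(β)·f_y. Assume on Ω: ∂⁺θ + sin(2ω)·∂⁺Ξ = 0, ∂⁻θ − sin(2ω)·∂⁻Ξ = 0, ∂⁺ω = (2·sin(ω)·(κ+sin²ω)/cos(ω))·(∂⁺Ξ + G(ω)·H) and ∂⁻ω = (2·sin(ω)·(κ+sin²ω)/cos(ω))·(∂⁻Ξ − G(ω)·H). Then, writing t = cos(ω), U = ∂⁺Ξ, V = ∂⁻Ξ and F(t) = (1−t²)(κ+1−t²), the Jacobian of the partial hodograph map (x,y) ↦ (cos ω(x,y), θ(x,y)) satisfies, at every point of Ω: sin(ω)·(θ_x·ω_y − θ_y·ω_x) = (2F(t)/t)·(2UV + G(ω)·H·(V − U)). -/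
import Mathlib


open Real Set

/-- Partial derivative in the `x`-direction. -/
noncomputable def px (f : ℝ × ℝ → ℝ) (p : ℝ × ℝ) : ℝ := fderiv ℝ f p (1, 0)

/-- Partial derivative in the `y`-direction. -/
noncomputable def py (f : ℝ × ℝ → ℝ) (p : ℝ × ℝ) : ℝ := fderiv ℝ f p (0, 1)

/-- Normalized directional derivative along the direction of inclination angle `a`. -/
noncomputable def dDir (a : ℝ × ℝ → ℝ) (f : ℝ × ℝ → ℝ) (p : ℝ × ℝ) : ℝ :=
  Real.cos (a p) * px f p + Real.sin (a p) * py f p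

/-- The function `G(ω) = (sin²ω/(κ+sin²ω))^((κ+1)/(2κ))`. -/
noncomputable def Gfun (κ ω : ℝ) : ℝ :=
  (Real.sin ω ^ 2 / (κ + Real.sin ω ^ 2)) ^ ((κ + 1) / (2 * κ))

/-- The function `F(t) = (1−t²)(κ+1−t²)`. -/
noncomputable def Ffun (κ t : ℝ) : ℝ := (1 - t ^ 2) * (κ + 1 - t ^ 2)

private lemma alg (κ sw cw G h P Q R S U V D : ℝ) (hcw : cw ≠ 0)
    (h1 : P + 2 * sw * cw * U = 0) (h2 : Q - 2 * sw * cw * V = 0)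
    (h3 : R = 2 * sw * (κ + sw ^ 2) / cw * (U + G * h))
    (h4 : S = 2 * sw * (κ + sw ^ 2) / cw * (V - G * h))
    (hQR : Q * R - P * S = 2 * sw * cw * D)
    (hpy : sw ^ 2 + cw ^ 2 = 1) :
    sw * D = 2 * ((1 - cw ^ 2) * (κ + 1 - cw ^ 2)) / cw * (2 * U * V + G * h * (V - U)) := by
  have h3' : R * cw = 2 * sw * (κ + sw ^ 2) * (U + G * h) := by
    rw [h3]; field_simp
  have h4' : S * cw = 2 * sw * (κ + sw ^ 2) * (V - G * h) := by
    rw [h4]; field_simp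
  rw [div_mul_eq_mul_div, eq_div_iff hcw]
  have key : sw * D * cw * cw
      = 2 * ((1 - cw ^ 2) * (κ + 1 - cw ^ 2)) * (2 * U * V + G * h * (V - U)) * cw := by
    linear_combination (-(sw * (κ + sw ^ 2) * (V - G * h))) * h1
      + (sw * (κ + sw ^ 2) * (U + G * h)) * h2
      + (Q / 2) * h3' + (-(P / 2)) * h4' + (-(cw / 2)) * hQR
      + (2 * cw * (2 * U * V + G * h * (V - U)) * (κ + 1 - cw ^ 2 + sw ^ 2)) * hpy
  exact mul_right_cancel₀ hcw key

/-- the Jacobian of the partial hodograph transformation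
`(x,y) ↦ (cos ω, θ)` in terms of `U = ∂⁺Ξ`, `V = ∂⁻Ξ` and `H`. -/
theorem hodograph_jacobian
    (κ : ℝ) (hκ : 0 < κ)
    (Ω : Set (ℝ × ℝ)) (hΩ : IsOpen Ω)
    (θ ω Ξ H : ℝ × ℝ → ℝ)
    (hθ : ContDiffOn ℝ 1 θ Ω) (hω : ContDiffOn ℝ 1 ω Ω) (hΞ : ContDiffOn ℝ 1 Ξ Ω)
    (hH : ContinuousOn H Ω)
    (hωrange : ∀ p ∈ Ω, 0 < ω p ∧ ω p < π / 2)
    (heq1 : ∀ p ∈ Ω,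
      dDir (fun q => θ q + ω q) θ p + Real.sin (2 * ω p) * dDir (fun q => θ q + ω q) Ξ p = 0)
    (heq2 : ∀ p ∈ Ω,
      dDir (fun q => θ q - ω q) θ p - Real.sin (2 * ω p) * dDir (fun q => θ q - ω q) Ξ p = 0)
    (heq3 : ∀ p ∈ Ω,
      dDir (fun q => θ q + ω q) ω p
        = (2 * Real.sin (ω p) * (κ + Real.sin (ω p) ^ 2) / Real.cos (ω p)) *
            (dDir (fun q => θ q + ω q) Ξ p + Gfun κ (ω p) * H p))
    (heq4 : ∀ p ∈ Ω,
      dDir (fun q => θ q - ω q) ω p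
        = (2 * Real.sin (ω p) * (κ + Real.sin (ω p) ^ 2) / Real.cos (ω p)) *
            (dDir (fun q => θ q - ω q) Ξ p - Gfun κ (ω p) * H p)) :
    ∀ p ∈ Ω,
      Real.sin (ω p) * (px θ p * py ω p - py θ p * px ω p)
        = (2 * Ffun κ (Real.cos (ω p)) / Real.cos (ω p)) *
            (2 * dDir (fun q => θ q + ω q) Ξ p * dDir (fun q => θ q - ω q) Ξ p
              + Gfun κ (ω p) * H p *
                (dDir (fun q => θ q - ω q) Ξ p - dDir (fun q => θ q + ω q) Ξ p)) := by
  intro p hp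
  obtain ⟨hw0, hw2⟩ := hωrange p hp
  have hπ := Real.pi_pos
  have hcw : 0 < Real.cos (ω p) := Real.cos_pos_of_mem_Ioo ⟨by linarith, hw2⟩
  have h1 := heq1 p hp
  have h2 := heq2 p hp
  rw [Real.sin_two_mul] at h1 h2
  have hQR : dDir (fun q => θ q - ω q) θ p * dDir (fun q => θ q + ω q) ω p
      - dDir (fun q => θ q + ω q) θ p * dDir (fun q => θ q - ω q) ω p
      = 2 * Real.sin (ω p) * Real.cos (ω p) * (px θ p * py ω p - py θ p * px ω p) := by
    simp only [dDir, Real.sin_add, Real.cos_add, Real.sin_sub, Real.cos_sub]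
    linear_combination (2 * Real.sin (ω p) * Real.cos (ω p) *
      (px θ p * py ω p - py θ p * px ω p)) * Real.sin_sq_add_cos_sq (θ p)
  have := alg κ (Real.sin (ω p)) (Real.cos (ω p)) (Gfun κ (ω p)) (H p)
      (dDir (fun q => θ q + ω q) θ p) (dDir (fun q => θ q - ω q) θ p)
      (dDir (fun q => θ q + ω q) ω p) (dDir (fun q => θ q - ω q) ω p)
      (dDir (fun q => θ q + ω q) Ξ p) (dDir (fun q => θ q - ω q) Ξ p)
      (px θ p * py ω p - py θ p * px ω p)
      hcw.ne' h1 h2 (heq3 p hp) (heq4 p hp) hQR (Real.sin_sq_add_cos_sq (ω p))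
  simpa only [Ffun] using this
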